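/- arXiv:1210.3997 — 3 statements merged into one kernel-verified Lean document; each statement's English description precedes it below -/
import Mathlib

section
/- Let L/K be a totally ramified Galois extension of degree p of complete discrete valued fields of characteristic p, with ramification break s, and let λ ∈ L be a root of X^p − X − f where f ∈ K satisfies v_K(f) = −s with s coprime to p. Then the valuation ring of L is O_L = { Σ_{i=0}^{p−1} a_i λ^i : a_i ∈ K with v_K(a_i) ≥ is/p for all i }. -/
/-!
Common background: complete discretely valued fields, their valuation rings,
residue fields, Galois action on the valuation ring, truncated Witt vector
functoriality, and ramification breaks.
-/

noncomputable section

open scoped Classical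

/-- A field equipped with a normalized (i.e. surjective onto `ℤ`) discrete additive
valuation `v : K → WithTop ℤ` with respect to which it is complete. -/
structure CompleteDiscreteValuation (K : Type*) [Field K] where
  v : K → WithTop ℤ
  eq_top_iff : ∀ x : K, v x = ⊤ ↔ x = 0
  map_one : v 1 = 0
  map_mul : ∀ x y : K, v (x * y) = v x + v y
  min_le_add : ∀ x y : K, min (v x) (v y) ≤ v (x + y)
  surjective : ∀ n : ℤ, ∃ x : K, v x = (n : WithTop ℤ)
  complete : ∀ x : ℕ → K,
      (∀ n : ℕ, ((n : ℤ) : WithTop ℤ) ≤ v (x (n + 1) - x n)) →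
      ∃ y : K, ∀ n : ℕ, ((n : ℤ) : WithTop ℤ) ≤ v (y - x n)

namespace TruncatedWittVector

variable {p n : ℕ} [hp : Fact p.Prime] {R S : Type*} [CommRing R] [CommRing S]

lemma truncateFun_congr_map (f : R →+* S) (a b : WittVector p R)
    (h : WittVector.truncateFun n a = WittVector.truncateFun n b) :
    WittVector.truncateFun n (WittVector.map f a) =
      WittVector.truncateFun n (WittVector.map f b) := by
  ext i
  have hc := congrArg (fun z => TruncatedWittVector.coeff i z) h
  simp only [WittVector.coeff_truncateFun] at hc ⊢
  rw [WittVector.map_coeff, WittVector.map_coeff, hc]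

/-- Functoriality of truncated Witt vectors: the ring homomorphism
`W_n(R) → W_n(S)` induced by `f : R → S`, acting componentwise. -/
def map (f : R →+* S) : TruncatedWittVector p n R →+* TruncatedWittVector p n S where
  toFun x := WittVector.truncateFun n (WittVector.map f x.out)
  map_one' := by
    show WittVector.truncateFun n (WittVector.map f (1 : TruncatedWittVector p n R).out) = 1
    have h : WittVector.truncateFun n ((1 : TruncatedWittVector p n R)).out =
        WittVector.truncateFun n (1 : WittVector p R) := by
      rw [truncateFun_out, WittVector.truncateFun_one]
    have := truncateFun_congr_map f _ _ h
    rw [this, map_one, WittVector.truncateFun_one]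
  map_mul' x y := by
    show WittVector.truncateFun n (WittVector.map f (x * y).out) =
      WittVector.truncateFun n (WittVector.map f x.out) *
        WittVector.truncateFun n (WittVector.map f y.out)
    have h : WittVector.truncateFun n (x * y).out =
        WittVector.truncateFun n (x.out * y.out) := by
      rw [truncateFun_out, WittVector.truncateFun_mul, truncateFun_out, truncateFun_out]
    have := truncateFun_congr_map f _ _ h
    rw [this, map_mul, WittVector.truncateFun_mul]
  map_zero' := by
    show WittVector.truncateFun n (WittVector.map f (0 : TruncatedWittVector p n R).out) = 0
    have h : WittVector.truncateFun n ((0 : TruncatedWittVector p n R)).out =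
        WittVector.truncateFun n (0 : WittVector p R) := by
      rw [truncateFun_out, WittVector.truncateFun_zero]
    have := truncateFun_congr_map f _ _ h
    rw [this, map_zero, WittVector.truncateFun_zero]
  map_add' x y := by
    show WittVector.truncateFun n (WittVector.map f (x + y).out) =
      WittVector.truncateFun n (WittVector.map f x.out) +
        WittVector.truncateFun n (WittVector.map f y.out)
    have h : WittVector.truncateFun n (x + y).out =
        WittVector.truncateFun n (x.out + y.out) := by
      rw [truncateFun_out, WittVector.truncateFun_add, truncateFun_out, truncateFun_out]
    have := truncateFun_congr_map f _ _ h
    rw [this, map_add, WittVector.truncateFun_add]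

@[simp]
lemma map_coeff (f : R →+* S) (x : TruncatedWittVector p n R) (i : Fin n) :
    (map f x).coeff i = f (x.coeff i) := by
  show (WittVector.truncateFun n (WittVector.map f x.out)).coeff i = f (x.coeff i)
  rw [WittVector.coeff_truncateFun, WittVector.map_coeff, coeff_out]

end TruncatedWittVector

namespace CompleteDiscreteValuation

variable {K : Type*} [Field K]

lemma v_zero (w : CompleteDiscreteValuation K) : w.v 0 = ⊤ := (w.eq_top_iff 0).2 rfl

lemma v_neg_one (w : CompleteDiscreteValuation K) : w.v (-1) = 0 := by
  have h := w.map_mul (-1) (-1)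
  rw [neg_mul_neg, one_mul, w.map_one] at h
  cases h' : w.v (-1) with
  | top =>
      exact absurd ((w.eq_top_iff (-1)).1 h') (by norm_num)
  | coe a =>
      rw [h'] at h
      have ha : a + a = 0 := by exact_mod_cast h.symm
      have : a = 0 := by omega
      rw [this]
      rfl

lemma v_neg (w : CompleteDiscreteValuation K) (x : K) : w.v (-x) = w.v x := by
  rw [show -x = -1 * x by ring, w.map_mul, w.v_neg_one, zero_add]

/-- The valuation ring (ring of integers) of a complete discretely valued field. -/
def integers (w : CompleteDiscreteValuation K) : Subring K where
  carrier := {x : K | 0 ≤ w.v x}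
  zero_mem' := by simp [Set.mem_setOf_eq, v_zero]
  one_mem' := by simp [Set.mem_setOf_eq, w.map_one]
  add_mem' {a b} ha hb := le_trans (le_min ha hb) (w.min_le_add a b)
  mul_mem' {a b} ha hb := by
    simp only [Set.mem_setOf_eq] at *
    rw [w.map_mul]
    exact add_nonneg ha hb
  neg_mem' {a} ha := by
    simp only [Set.mem_setOf_eq] at *
    rwa [w.v_neg]

lemma mem_integers_iff (w : CompleteDiscreteValuation K) (x : K) :
    x ∈ w.integers ↔ 0 ≤ w.v x := Iff.rfl

/-- The maximal ideal of the valuation ring. -/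
def maxIdeal (w : CompleteDiscreteValuation K) : Ideal w.integers where
  carrier := {x | 0 < w.v (x : K)}
  zero_mem' := by simp [Set.mem_setOf_eq, v_zero]
  add_mem' {a b} ha hb := lt_of_lt_of_le (lt_min ha hb) (w.min_le_add (a : K) (b : K))
  smul_mem' c x hx := by
    simp only [Set.mem_setOf_eq] at *
    show 0 < w.v ((c : K) * (x : K))
    rw [w.map_mul]
    exact lt_of_lt_of_le hx (le_add_of_nonneg_left c.2)

/-- The residue field of a complete discretely valued field. -/
abbrev residueField (w : CompleteDiscreteValuation K) := w.integers ⧸ w.maxIdeal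

section Extension

variable {L : Type*} [Field L] [Algebra K L]

/-- The ring homomorphism between valuation rings induced by the inclusion `K ⟶ L`,
when the valuation of `L` restricts to `e` times the valuation of `K`. -/
def integerMap (wK : CompleteDiscreteValuation K) (wL : CompleteDiscreteValuation L)
    (e : ℕ) (hcomp : ∀ x : K, wL.v (algebraMap K L x) = e • wK.v x) :
    wK.integers →+* wL.integers where
  toFun x := ⟨algebraMap K L x, by
    rw [mem_integers_iff, hcomp]
    exact nsmul_nonneg x.2 e⟩
  map_one' := Subtype.ext (by simp)
  map_mul' x y := Subtype.ext (by simp)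
  map_zero' := Subtype.ext (by simp)
  map_add' x y := Subtype.ext (by simp)

/-- The induced homomorphism between the residue fields. -/
def residueMap (wK : CompleteDiscreteValuation K) (wL : CompleteDiscreteValuation L)
    (e : ℕ) (he : 0 < e) (hcomp : ∀ x : K, wL.v (algebraMap K L x) = e • wK.v x) :
    wK.residueField →+* wL.residueField :=
  Ideal.Quotient.lift wK.maxIdeal
    ((Ideal.Quotient.mk wL.maxIdeal).comp (integerMap wK wL e hcomp))
    (by
      intro a ha
      rw [RingHom.comp_apply, Ideal.Quotient.eq_zero_iff_mem]
      show 0 < wL.v (algebraMap K L (a : K))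
      rw [hcomp]
      calc (0 : WithTop ℤ) < wK.v (a : K) := ha
        _ = 1 • wK.v (a : K) := (one_nsmul _).symm
        _ ≤ e • wK.v (a : K) := nsmul_le_nsmul_left (le_of_lt ha) he)

/-- The induced extension of residue fields `k_L / k_K` is separable. -/
def ResidueSeparable (wK : CompleteDiscreteValuation K) (wL : CompleteDiscreteValuation L)
    (e : ℕ) (he : 0 < e) (hcomp : ∀ x : K, wL.v (algebraMap K L x) = e • wK.v x) : Prop :=
  letI : Algebra wK.residueField wL.residueField := (residueMap wK wL e he hcomp).toAlgebra
  Algebra.IsSeparable wK.residueField wL.residueField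

/-- A `K`-algebra automorphism of `L` (necessarily preserving the valuation, which is
recorded in the hypothesis `hGal`) restricts to a ring homomorphism of the valuation
ring `O_L`.  This is the Galois action on `O_L`. -/
def galRes (wL : CompleteDiscreteValuation L)
    (hGal : ∀ (σ : L ≃ₐ[K] L) (x : L), wL.v (σ x) = wL.v x) (σ : L ≃ₐ[K] L) :
    wL.integers →+* wL.integers where
  toFun x := ⟨σ x, by rw [mem_integers_iff, hGal]; exact x.2⟩
  map_one' := Subtype.ext (by simp)
  map_mul' x y := Subtype.ext (by simp)
  map_zero' := Subtype.ext (by simp)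
  map_add' x y := Subtype.ext (by simp)

/-- The statement that the action of the Galois group of `L/K` on `O_L/m_L^{s+1}`
is faithful: every nontrivial automorphism moves some integer of `L` by an element
of valuation at most `s`. -/
def FaithfulOnQuotient (K : Type*) [Field K] {L : Type*} [Field L] [Algebra K L]
    (wL : CompleteDiscreteValuation L) (s : ℕ) : Prop :=
  ∀ σ : L ≃ₐ[K] L, σ ≠ 1 → ∃ x : L, 0 ≤ wL.v x ∧ wL.v (σ x - x) ≤ ((s : ℤ) : WithTop ℤ)

/-- `s` is the ramification break (lower ramification jump) of `L/K`: the smallest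
nonnegative integer such that the induced action of `Gal(L/K)` on `O_L/m_L^{s+1}`
is faithful. -/
def IsRamificationBreak (K : Type*) [Field K] {L : Type*} [Field L] [Algebra K L]
    (wL : CompleteDiscreteValuation L) (s : ℕ) : Prop :=
  FaithfulOnQuotient K wL s ∧ ∀ t : ℕ, t < s → ¬ FaithfulOnQuotient K wL t

end Extension

end CompleteDiscreteValuation

open CompleteDiscreteValuation

namespace CompleteDiscreteValuation

variable {K : Type*} [Field K] (w : CompleteDiscreteValuation K)

omit w in
lemma coe_nsmul' (n : ℕ) (a : ℤ) :
    n • ((a : WithTop ℤ)) = (((n : ℤ) * a : ℤ) : WithTop ℤ) := by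
  induction n with
  | zero => simp
  | succ k ih =>
      rw [succ_nsmul, ih, ← WithTop.coe_add]
      congr 1
      push_cast
      ring

lemma v_pow (x : K) (t : ℤ) (hx : w.v x = (t : WithTop ℤ)) (n : ℕ) :
    w.v (x ^ n) = (((n : ℤ) * t : ℤ) : WithTop ℤ) := by
  induction n with
  | zero => simpa using w.map_one
  | succ k ih =>
      rw [pow_succ, w.map_mul, ih, hx, ← WithTop.coe_add]
      congr 1
      push_cast
      ring

lemma v_add_eq (a b : K) (h : w.v a < w.v b) : w.v (a + b) = w.v a := by
  refine le_antisymm ?_ ?_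
  · have h1 := w.min_le_add (a + b) (-b)
    rw [show a + b + -b = a by ring, w.v_neg] at h1
    by_contra hle
    push_neg at hle
    exact absurd h1 (not_le.2 (lt_min hle h))
  · have h2 := w.min_le_add a b
    rwa [min_eq_left h.le] at h2

lemma le_v_sum {ι : Type*} (s : Finset ι) (g : ι → K) (c : WithTop ℤ)
    (h : ∀ i ∈ s, c ≤ w.v (g i)) : c ≤ w.v (∑ i ∈ s, g i) := by
  classical
  induction s using Finset.cons_induction with
  | empty => simp [w.v_zero]
  | cons a s ha ih =>
      rw [Finset.sum_cons]
      exact le_trans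
        (le_min (h a (Finset.mem_cons_self a s))
          (ih fun i hi => h i (Finset.mem_cons_of_mem hi)))
        (w.min_le_add _ _)

lemma v_sum_eq {ι : Type*} [DecidableEq ι] (s : Finset ι) (g : ι → K) (i₀ : ι)
    (hi₀ : i₀ ∈ s) (c : ℤ) (hc : w.v (g i₀) = (c : WithTop ℤ))
    (hlt : ∀ i ∈ s, i ≠ i₀ → w.v (g i₀) < w.v (g i)) :
    w.v (∑ i ∈ s, g i) = (c : WithTop ℤ) := by
  rw [← Finset.add_sum_erase s g hi₀, ← hc]
  apply w.v_add_eq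
  rw [hc]
  have hrest : ((c + 1 : ℤ) : WithTop ℤ) ≤ w.v (∑ i ∈ s.erase i₀, g i) := by
    apply w.le_v_sum
    intro i hi
    have h := hlt i (Finset.mem_of_mem_erase hi) (Finset.ne_of_mem_erase hi)
    rw [hc] at h
    cases hv : w.v (g i) with
    | top => exact le_top
    | coe d =>
        rw [hv] at h
        have hcd : c < d := by exact_mod_cast h
        exact_mod_cast Int.add_one_le_iff.mpr hcd
  calc (c : WithTop ℤ) < ((c + 1 : ℤ) : WithTop ℤ) := by exact_mod_cast lt_add_one c
    _ ≤ _ := hrest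

lemma v_sum_min {ι : Type*} [DecidableEq ι] (s : Finset ι) (g : ι → K)
    (hd : ∀ i ∈ s, ∀ j ∈ s, i ≠ j → g i ≠ 0 → g j ≠ 0 → w.v (g i) ≠ w.v (g j))
    (hne : ∃ i ∈ s, g i ≠ 0) :
    ∃ i₀ ∈ s, g i₀ ≠ 0 ∧ w.v (∑ i ∈ s, g i) = w.v (g i₀) ∧
      ∀ i ∈ s, w.v (∑ i ∈ s, g i) ≤ w.v (g i) := by
  classical
  obtain ⟨j, hj, hgj⟩ := hne
  set T := s.filter (fun i => g i ≠ 0) with hT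
  have hTne : T.Nonempty := ⟨j, Finset.mem_filter.2 ⟨hj, hgj⟩⟩
  obtain ⟨i₀, hi₀T, hmin⟩ := T.exists_min_image (fun i => w.v (g i)) hTne
  obtain ⟨hi₀s, hgi₀⟩ := Finset.mem_filter.1 hi₀T
  obtain ⟨c, hc⟩ : ∃ c : ℤ, w.v (g i₀) = (c : WithTop ℤ) := by
    cases hv : w.v (g i₀) with
    | top => exact absurd ((w.eq_top_iff _).1 hv) hgi₀
    | coe c => exact ⟨c, rfl⟩
  have hlt : ∀ i ∈ s, i ≠ i₀ → w.v (g i₀) < w.v (g i) := by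
    intro i hi hne'
    by_cases hz : g i = 0
    · rw [hz, w.v_zero, hc]
      exact WithTop.coe_lt_top c
    · exact lt_of_le_of_ne (hmin i (Finset.mem_filter.2 ⟨hi, hz⟩))
        (hd i₀ hi₀s i hi hne'.symm hgi₀ hz)
  have hsum := w.v_sum_eq s g i₀ hi₀s c hc hlt
  refine ⟨i₀, hi₀s, hgi₀, by rw [hsum, hc], ?_⟩
  intro i hi
  rw [hsum, ← hc]
  by_cases hz : g i = 0
  · rw [hz, w.v_zero]
    exact le_top
  · exact hmin i (Finset.mem_filter.2 ⟨hi, hz⟩)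

end CompleteDiscreteValuation

/-- Let `L/K` be a totally ramified Galois extension of degree `p` of
complete discrete valued fields of characteristic `p` with ramification break `s`, and
let `λ ∈ L` be a root of `X^p - X - f` where `v_K(f) = -s` and `gcd(s, p) = 1`.  Then
`O_L = { Σ_{i<p} aᵢ λ^i : aᵢ ∈ K, v_K(aᵢ) ≥ i s / p }`. -/
theorem integers_eq_artin_schreier_span
    (p : ℕ) (hp : p.Prime)
    {K L : Type*} [Field K] [Field L] [Algebra K L] [CharP K p]
    (wK : CompleteDiscreteValuation K) (wL : CompleteDiscreteValuation L)
    [IsGalois K L] [FiniteDimensional K L] (hdeg : Module.finrank K L = p)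
    (htot : ∀ x : K, wL.v (algebraMap K L x) = p • wK.v x)
    (s : ℕ) (hs : IsRamificationBreak K wL s) (hcop : Nat.Coprime s p)
    (f : K) (hf : wK.v f = ((-(s : ℤ) : ℤ) : WithTop ℤ))
    (lam : L) (hlam : lam ^ p - lam = algebraMap K L f) :
    ∀ x : L, x ∈ wL.integers ↔
      ∃ a : ℕ → K,
        x = ∑ i ∈ Finset.range p, algebraMap K L (a i) * lam ^ i ∧
        ∀ i < p, ∀ m : ℤ, wK.v (a i) = (m : WithTop ℤ) →
          (i : ℚ) * (s : ℚ) / (p : ℚ) ≤ (m : ℚ) := by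
  have hp0 : 0 < p := hp.pos
  have hp2 : (2 : ℤ) ≤ (p : ℤ) := by exact_mod_cast hp.two_le
  have hs1 : 0 < s := by
    rcases Nat.eq_zero_or_pos s with h | h
    · exfalso
      rw [h, Nat.coprime_zero_left] at hcop
      exact hp.one_lt.ne' hcop
    · exact h
  have hinj := (algebraMap K L).injective
  -- `lam ≠ 0`
  have hlam0 : lam ≠ 0 := by
    intro h
    have hzz : algebraMap K L f = 0 := by
      rw [← hlam, h, zero_pow hp0.ne', sub_self]
    have hf0 : f = 0 := hinj (by simpa using hzz)
    rw [hf0, wK.v_zero] at hf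
    exact (WithTop.top_ne_coe) hf
  have hvalK : ∀ a : K, a ≠ 0 → ∃ m : ℤ, wK.v a = (m : WithTop ℤ) := by
    intro a ha
    cases hv : wK.v a with
    | top => exact absurd ((wK.eq_top_iff _).1 hv) ha
    | coe m => exact ⟨m, rfl⟩
  have hvalL : ∀ a : L, a ≠ 0 → ∃ m : ℤ, wL.v a = (m : WithTop ℤ) := by
    intro a ha
    cases hv : wL.v a with
    | top => exact absurd ((wL.eq_top_iff _).1 hv) ha
    | coe m => exact ⟨m, rfl⟩
  obtain ⟨t, ht⟩ := hvalL lam hlam0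
  have hvf : wL.v (algebraMap K L f) = ((-((p : ℤ) * (s : ℤ)) : ℤ) : WithTop ℤ) := by
    rw [htot, hf, coe_nsmul' p (-(s : ℤ))]
    congr 1
    ring
  -- `wL.v lam = -s`
  have hts : t = -(s : ℤ) := by
    have hppow : wL.v (lam ^ p) = (((p : ℤ) * t : ℤ) : WithTop ℤ) := wL.v_pow lam t ht p
    by_cases htneg : t < 0
    · have hlt : wL.v (lam ^ p) < wL.v (-lam) := by
        rw [hppow, wL.v_neg, ht]
        have : (p : ℤ) * t < t := by nlinarith
        exact_mod_cast this
      have heq := wL.v_add_eq _ _ hlt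
      rw [← sub_eq_add_neg, hlam, hvf, hppow] at heq
      have h1 : -((p : ℤ) * (s : ℤ)) = (p : ℤ) * t := by exact_mod_cast heq
      have h2 : (p : ℤ) * t = (p : ℤ) * (-(s : ℤ)) := by linarith
      exact mul_left_cancel₀ (by positivity) h2
    · exfalso
      push_neg at htneg
      have h0 : (((0 : ℤ)) : WithTop ℤ) ≤ wL.v (lam ^ p - lam) := by
        rw [sub_eq_add_neg]
        refine le_trans (le_min ?_ ?_) (wL.min_le_add _ _)
        · rw [hppow]
          have : (0 : ℤ) ≤ (p : ℤ) * t := by positivity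
          exact_mod_cast this
        · rw [wL.v_neg, ht]
          exact_mod_cast htneg
      rw [hlam, hvf] at h0
      have h1 : (0 : ℤ) ≤ -((p : ℤ) * (s : ℤ)) := by exact_mod_cast h0
      have : (0 : ℤ) < (p : ℤ) * (s : ℤ) := by positivity
      linarith
  have hlamv : wL.v lam = ((-(s : ℤ) : ℤ) : WithTop ℤ) := by rw [ht, hts]
  -- valuation of a single term
  have hterm : ∀ (i : ℕ) (a : K), ∀ m : ℤ, wK.v a = (m : WithTop ℤ) →
      wL.v (algebraMap K L a * lam ^ i) =
        (((p : ℤ) * m - (i : ℤ) * (s : ℤ) : ℤ) : WithTop ℤ) := by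
    intro i a m hm
    rw [wL.map_mul, htot, hm, coe_nsmul' p m, wL.v_pow lam _ hlamv i, ← WithTop.coe_add]
    congr 1
    ring
  -- distinct valuations of distinct nonzero terms
  have hdist : ∀ i < p, ∀ j < p, i ≠ j → ∀ a b : K, a ≠ 0 → b ≠ 0 →
      wL.v (algebraMap K L a * lam ^ i) ≠ wL.v (algebraMap K L b * lam ^ j) := by
    intro i hi j hj hij a b ha hb
    obtain ⟨m, hm⟩ := hvalK a ha
    obtain ⟨n, hn⟩ := hvalK b hb
    rw [hterm i a m hm, hterm j b n hn]
    intro h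
    have h' : (p : ℤ) * m - (i : ℤ) * (s : ℤ) = (p : ℤ) * n - (j : ℤ) * (s : ℤ) := by
      exact_mod_cast h
    have hdvd : (p : ℤ) ∣ ((i : ℤ) - (j : ℤ)) * (s : ℤ) :=
      ⟨m - n, by linarith⟩
    have hps : ¬ ((p : ℤ) ∣ (s : ℤ)) := by
      rw [Int.natCast_dvd_natCast]
      exact (Nat.Prime.coprime_iff_not_dvd hp).1 hcop.symm
    have hpij : (p : ℤ) ∣ ((i : ℤ) - (j : ℤ)) := by
      rcases Int.Prime.dvd_mul' hp hdvd with h | h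
      · exact h
      · exact absurd h hps
    have habs : |(i : ℤ) - (j : ℤ)| < (p : ℤ) := by
      rw [abs_lt]
      omega
    have := Int.eq_zero_of_abs_lt_dvd hpij habs
    exact hij (by omega)
  intro x
  constructor
  · -- forward direction
    intro hx
    -- linear independence of powers of lam
    have li : LinearIndependent K (fun i : Fin p => lam ^ (i : ℕ)) := by
      rw [Fintype.linearIndependent_iff]
      intro g hg
      by_contra hne
      push_neg at hne
      obtain ⟨j, hj⟩ := hne
      simp only [Algebra.smul_def] at hg
      have hd : ∀ i ∈ (Finset.univ : Finset (Fin p)), ∀ k ∈ (Finset.univ : Finset (Fin p)),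
          i ≠ k → (algebraMap K L (g i) * lam ^ (i : ℕ)) ≠ 0 →
          (algebraMap K L (g k) * lam ^ (k : ℕ)) ≠ 0 →
          wL.v (algebraMap K L (g i) * lam ^ (i : ℕ)) ≠
            wL.v (algebraMap K L (g k) * lam ^ (k : ℕ)) := by
        intro i _ k _ hik hti htk
        have hgi : g i ≠ 0 := fun h => hti (by rw [h, map_zero, zero_mul])
        have hgk : g k ≠ 0 := fun h => htk (by rw [h, map_zero, zero_mul])
        exact hdist i i.isLt k k.isLt (fun h => hik (Fin.ext h)) (g i) (g k) hgi hgk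
      have hnet : ∃ i ∈ (Finset.univ : Finset (Fin p)),
          (algebraMap K L (g i) * lam ^ (i : ℕ)) ≠ 0 :=
        ⟨j, Finset.mem_univ j,
          mul_ne_zero ((map_ne_zero (algebraMap K L)).2 hj) (pow_ne_zero _ hlam0)⟩
      obtain ⟨i₀, _, hterm0, hveq, _⟩ := wL.v_sum_min Finset.univ
        (fun i : Fin p => algebraMap K L (g i) * lam ^ (i : ℕ)) hd hnet
      rw [hg, wL.v_zero] at hveq
      exact hterm0 ((wL.eq_top_iff _).1 hveq.symm)
    haveI : Nonempty (Fin p) := ⟨⟨0, hp0⟩⟩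
    have hcard : Fintype.card (Fin p) = Module.finrank K L := by simp [hdeg]
    set b := basisOfLinearIndependentOfCardEqFinrank li hcard with hbdef
    have hb : ∀ i : Fin p, b i = lam ^ (i : ℕ) := fun i => by
      rw [hbdef, coe_basisOfLinearIndependentOfCardEqFinrank]
    set a : ℕ → K := fun n => if h : n < p then b.repr x ⟨n, h⟩ else 0 with ha
    have haeq : ∀ i : Fin p, a (i : ℕ) = b.repr x i := by
      intro i
      rw [ha]
      simp
    have hxrep : x = ∑ i ∈ Finset.range p, algebraMap K L (a i) * lam ^ i := by
      conv_lhs => rw [← b.sum_repr x]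
      rw [← Fin.sum_univ_eq_sum_range (fun n => algebraMap K L (a n) * lam ^ n) p]
      refine Finset.sum_congr rfl fun i _ => ?_
      rw [haeq i, hb i, Algebra.smul_def]
    refine ⟨a, hxrep, ?_⟩
    intro i hi m hm
    have hai : a i ≠ 0 := by
      intro h
      rw [h, wK.v_zero] at hm
      exact WithTop.top_ne_coe hm
    have hd : ∀ i' ∈ Finset.range p, ∀ j' ∈ Finset.range p,
        i' ≠ j' → (algebraMap K L (a i') * lam ^ i') ≠ 0 →
        (algebraMap K L (a j') * lam ^ j') ≠ 0 →
        wL.v (algebraMap K L (a i') * lam ^ i') ≠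
          wL.v (algebraMap K L (a j') * lam ^ j') := by
      intro i' hi' j' hj' hij hti htj
      have hai' : a i' ≠ 0 := fun h => hti (by rw [h, map_zero, zero_mul])
      have haj' : a j' ≠ 0 := fun h => htj (by rw [h, map_zero, zero_mul])
      exact hdist i' (Finset.mem_range.1 hi') j' (Finset.mem_range.1 hj') hij
        (a i') (a j') hai' haj'
    have hnet : ∃ i' ∈ Finset.range p, (algebraMap K L (a i') * lam ^ i') ≠ 0 :=
      ⟨i, Finset.mem_range.2 hi,
        mul_ne_zero ((map_ne_zero (algebraMap K L)).2 hai) (pow_ne_zero _ hlam0)⟩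
    obtain ⟨i₀, _, _, _, hle⟩ := wL.v_sum_min (Finset.range p)
      (fun n => algebraMap K L (a n) * lam ^ n) hd hnet
    have h0 : (0 : WithTop ℤ) ≤ wL.v (∑ n ∈ Finset.range p, algebraMap K L (a n) * lam ^ n) := by
      rw [← hxrep]
      exact hx
    have hle' := le_trans h0 (hle i (Finset.mem_range.2 hi))
    rw [hterm i (a i) m hm] at hle'
    have h2 : (0 : ℤ) ≤ (p : ℤ) * m - (i : ℤ) * (s : ℤ) := by exact_mod_cast hle'
    rw [div_le_iff₀ (by exact_mod_cast hp0 : (0 : ℚ) < (p : ℚ))]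
    have h3 : (i : ℤ) * (s : ℤ) ≤ m * (p : ℤ) := by linarith
    exact_mod_cast h3
  · -- reverse direction
    rintro ⟨a, rfl, hcond⟩
    refine sum_mem fun i hi => ?_
    rw [Finset.mem_range] at hi
    by_cases hai : a i = 0
    · rw [hai, map_zero, zero_mul]
      exact zero_mem _
    · obtain ⟨m, hm⟩ := hvalK (a i) hai
      have h1 := hcond i hi m hm
      rw [mem_integers_iff, hterm i (a i) m hm]
      rw [div_le_iff₀ (by exact_mod_cast hp0 : (0 : ℚ) < (p : ℚ))] at h1
      have h2 : (i : ℤ) * (s : ℤ) ≤ m * (p : ℤ) := by exact_mod_cast h1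
      have h3 : (0 : ℤ) ≤ (p : ℤ) * m - (i : ℤ) * (s : ℤ) := by linarith
      exact_mod_cast h3
end
end

section
/- Let L/K be a totally ramified Galois extension of degree p of complete discrete valued fields of characteristic p, with ramification break s, and let λ ∈ L be a root of X^p − X − f where f ∈ K satisfies v_K(f) = −s with s coprime to p. Then the set of elements of O_L of trace zero is O_L^{tr=0} = { Σ_{i=0}^{p−2} a_i λ^i : a_i ∈ K with v_K(a_i) ≥ is/p for all i }. -/
/-!
Common background: complete discretely valued fields, their valuation rings,
residue fields, Galois action on the valuation ring, truncated Witt vector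
functoriality, and ramification breaks.
-/

noncomputable section

open scoped Classical

open CompleteDiscreteValuation

/-!
Since `v_K(f) = -s < 0`, the root `λ` has `v_L(λ) = -s`, prime to `p`. Hence `λ ∉ K`, so `λ`
generates `L` (the degree is prime), and the valuations `p·v_K(aᵢ) - i·s` of the terms `aᵢλⁱ` (`i < p`) are pairwise
distinct: `Σ aᵢλⁱ` is integral iff every term is. The conjugates of `λ` are the `λ + c`,
`c ∈ 𝔽_p`, and `Σ_{c ∈ 𝔽_p} (λ + c)ⁱ` is `0` for `i < p - 1` and `-1` for `i = p - 1`, so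
`tr(Σ_{i<p} aᵢλⁱ) = -a_{p-1}`.
-/

namespace AddValuation

variable {R : Type*} [Ring R]

theorem le_map_sum_iff_of_injOn {Γ₀ : Type*} [LinearOrderedAddCommMonoidWithTop Γ₀]
    (v : AddValuation R Γ₀) {ι : Type*} {s : Finset ι} {t : ι → R} {g : Γ₀}
    (hinj : Set.InjOn (fun i ↦ v (t i)) {i | i ∈ s ∧ t i ≠ 0}) :
    g ≤ v (∑ i ∈ s, t i) ↔ ∀ i ∈ s, g ≤ v (t i) := by
  refine ⟨fun hg ↦ ?_, v.map_le_sum⟩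
  rcases s.eq_empty_or_nonempty with rfl | hs
  · simp
  obtain ⟨j, hj, hmin⟩ := s.exists_min_image (fun i ↦ v (t i)) hs
  intro i hi
  refine le_trans ?_ (hmin i hi)
  by_cases htop : v (t j) = ⊤
  · rw [htop]; exact le_top
  have hlt : ∀ i ∈ s.erase j, v (t j) < v (t i) := by
    intro i hi
    obtain ⟨hij, hi⟩ := Finset.mem_erase.1 hi
    refine lt_of_le_of_ne (hmin i hi) fun heq ↦ hij (hinj ⟨hi, ?_⟩ ⟨hj, ?_⟩ heq.symm)
    · rintro h0; rw [h0, v.map_zero] at heq; exact htop heq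
    · rintro h0; rw [h0, v.map_zero] at htop; exact htop rfl
  rwa [← Finset.add_sum_erase s t hj, v.map_add_eq_of_lt_left (v.map_lt_sum htop hlt)] at hg

theorem map_eq_of_pow_sub_self_eq (v : AddValuation R (WithTop ℤ)) {p : ℕ} (hp : 1 < p)
    {x : R} {n : ℤ} (hn : n < 0) (hx : v (x ^ p - x) = ((p * n : ℤ) : WithTop ℤ)) :
    v x = n := by
  have hneg : v x < 0 := by
    by_contra! h
    have : 0 ≤ v (x ^ p - x) := le_trans (le_min (by rw [v.map_pow]; exact nsmul_nonneg h p) h)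
      (v.map_sub _ _)
    rw [hx, WithTop.coe_nonneg] at this
    nlinarith
  obtain ⟨m, hm⟩ := WithTop.ne_top_iff_exists.1 (ne_top_of_lt hneg)
  rw [← hm, ← WithTop.coe_zero, WithTop.coe_lt_coe] at hneg
  have hlt : v (x ^ p) < v x := by
    rw [v.map_pow, ← hm, ← WithTop.coe_nsmul, WithTop.coe_lt_coe, nsmul_eq_mul]
    nlinarith
  rw [v.map_sub_eq_of_lt_left hlt, v.map_pow, ← hm, ← WithTop.coe_nsmul, nsmul_eq_mul,
    WithTop.coe_inj] at hx
  rw [← hm, WithTop.coe_inj]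
  exact mul_left_cancel₀ (by positivity) hx

end AddValuation

section ZModPowerSums

variable (p : ℕ) [Fact p.Prime]

theorem ZMod.sum_pow_card_sub_one : ∑ c : ZMod p, c ^ (p - 1) = -1 := by
  rw [← Finset.add_sum_erase _ _ (Finset.mem_univ 0), zero_pow (Nat.sub_ne_zero_of_lt
    (Fact.out : p.Prime).one_lt), zero_add, Finset.sum_congr rfl fun c hc ↦
    ZMod.pow_card_sub_one_eq_one (Finset.ne_of_mem_erase hc)]
  simp [Finset.card_univ, ZMod.card, Nat.cast_sub (Fact.out : p.Prime).one_le]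

variable {R : Type*} [CommRing R] [CharP R p]

theorem ZMod.sum_add_castHom_pow (x : R) (n : ℕ) :
    ∑ c : ZMod p, (x + ZMod.castHom dvd_rfl R c) ^ n =
      ∑ j ∈ Finset.range (n + 1),
        x ^ j * n.choose j * ZMod.castHom dvd_rfl R (∑ c : ZMod p, c ^ (n - j)) := by
  simp_rw [add_pow, map_sum, map_pow]
  rw [Finset.sum_comm]
  refine Finset.sum_congr rfl fun j _ ↦ ?_
  rw [Finset.mul_sum]
  exact Finset.sum_congr rfl fun c _ ↦ by ring

theorem ZMod.sum_add_castHom_pow_of_lt (x : R) {n : ℕ} (hn : n < p - 1) :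
    ∑ c : ZMod p, (x + ZMod.castHom dvd_rfl R c) ^ n = 0 := by
  rw [ZMod.sum_add_castHom_pow]
  refine Finset.sum_eq_zero fun j _ ↦ ?_
  rw [FiniteField.sum_pow_lt_card_sub_one (ZMod p) _ (by rw [ZMod.card]; omega)]
  simp

theorem ZMod.sum_add_castHom_pow_card_sub_one (x : R) :
    ∑ c : ZMod p, (x + ZMod.castHom dvd_rfl R c) ^ (p - 1) = -1 := by
  rw [ZMod.sum_add_castHom_pow, Finset.sum_eq_single_of_mem 0 (by simp)]
  · simp [ZMod.sum_pow_card_sub_one]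
  · intro j hj hj0
    rw [FiniteField.sum_pow_lt_card_sub_one (ZMod p) _
      (by rw [ZMod.card]; have := Finset.mem_range.1 hj; omega)]
    simp

end ZModPowerSums

open Module IntermediateField

section ArtinSchreier

variable {p : ℕ} [Fact p.Prime] {K L : Type*} [Field K] [Field L] [Algebra K L]

theorem PowerBasis.exists_eq_sum_range (pb : PowerBasis K L) (y : L) :
    ∃ b : ℕ → K, y = ∑ i ∈ Finset.range pb.dim, algebraMap K L (b i) * pb.gen ^ i := by
  obtain ⟨f, hf, rfl⟩ := pb.exists_eq_aeval y
  exact ⟨f.coeff, by simp [Polynomial.aeval_eq_sum_range' hf, Algebra.smul_def]⟩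

theorem exists_powerBasis_gen_eq_of_finrank_prime [FiniteDimensional K L]
    (hp : (finrank K L).Prime) {x : L} (hx : x ∉ (⊥ : IntermediateField K L)) :
    ∃ pb : PowerBasis K L, pb.gen = x := by
  have htop : K⟮x⟯ = ⊤ :=
    ((isSimpleOrder_of_finrank_prime K L hp).eq_bot_or_eq_top _).resolve_left
      (adjoin_simple_eq_bot_iff.not.2 hx)
  have hint := IsIntegral.of_finite K x
  refine ⟨PowerBasis.ofAdjoinEqTop hint ?_, rfl⟩
  rw [← adjoin_simple_toSubalgebra_of_isAlgebraic hint.isAlgebraic, htop,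
    top_toSubalgebra]

theorem sum_algEquiv_sum_range_mul_pow [Fintype (L ≃ₐ[K] L)] (x : L) (b : ℕ → K) (n : ℕ) :
    ∑ σ : L ≃ₐ[K] L, σ (∑ i ∈ Finset.range n, algebraMap K L (b i) * x ^ i) =
      ∑ i ∈ Finset.range n, algebraMap K L (b i) * ∑ σ : L ≃ₐ[K] L, σ x ^ i := by
  simp only [map_sum, _root_.map_mul, map_pow, AlgEquiv.commutes, Finset.mul_sum]
  exact Finset.sum_comm

variable [CharP L p]

theorem exists_castHom_eq_of_pow_eq_self {t : L} (ht : t ^ p = t) :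
    ∃ c : ZMod p, ZMod.castHom dvd_rfl L c = t := by
  rw [← RingHom.mem_fieldRange, ZMod.fieldRange_castHom_eq_bot p]
  exact (Subfield.mem_bot_iff_pow_eq_self L p).2 ht

theorem AlgEquiv.exists_apply_eq_add_castHom {x : L} {f : K}
    (hx : x ^ p - x = algebraMap K L f) (σ : L ≃ₐ[K] L) :
    ∃ c : ZMod p, σ x = x + ZMod.castHom dvd_rfl L c := by
  obtain ⟨c, hc⟩ := exists_castHom_eq_of_pow_eq_self (t := σ x - x) (by
    have hσ := congrArg σ hx
    rw [map_sub, map_pow, AlgEquiv.commutes, ← hx] at hσ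
    rw [sub_pow_char]
    linear_combination hσ)
  exact ⟨c, by rw [hc]; ring⟩

theorem sum_algEquiv_apply_gen_eq_sum_zmod [IsGalois K L] [FiniteDimensional K L]
    (hdeg : finrank K L = p) (pb : PowerBasis K L) {f : K}
    (hgen : pb.gen ^ p - pb.gen = algebraMap K L f) {M : Type*} [AddCommMonoid M] (g : L → M) :
    ∑ σ : L ≃ₐ[K] L, g (σ pb.gen) = ∑ c : ZMod p, g (pb.gen + ZMod.castHom dvd_rfl L c) := by
  choose c hc using AlgEquiv.exists_apply_eq_add_castHom hgen
  have hinj : Function.Injective c := fun σ τ h ↦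
    AlgEquiv.coe_toAlgHom_injective (pb.algHom_ext (by simp [hc, h]))
  have hcard : Fintype.card (L ≃ₐ[K] L) = Fintype.card (ZMod p) := by
    rw [ZMod.card, ← Nat.card_eq_fintype_card, IsGalois.card_aut_eq_finrank, hdeg]
  exact Fintype.sum_bijective c ((Fintype.bijective_iff_injective_and_card c).2 ⟨hinj, hcard⟩)
    _ _ fun σ ↦ by rw [hc]

theorem sum_algEquiv_sum_range_pred_eq_zero [IsGalois K L] [FiniteDimensional K L]
    (hdeg : finrank K L = p) (pb : PowerBasis K L) {f : K}
    (hgen : pb.gen ^ p - pb.gen = algebraMap K L f) (b : ℕ → K) :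
    ∑ σ : L ≃ₐ[K] L, σ (∑ i ∈ Finset.range (p - 1), algebraMap K L (b i) * pb.gen ^ i) = 0 := by
  rw [sum_algEquiv_sum_range_mul_pow]
  refine Finset.sum_eq_zero fun i hi ↦ ?_
  rw [sum_algEquiv_apply_gen_eq_sum_zmod hdeg pb hgen (· ^ i),
    ZMod.sum_add_castHom_pow_of_lt p _ (Finset.mem_range.1 hi), mul_zero]

theorem sum_algEquiv_sum_range_eq_neg [IsGalois K L] [FiniteDimensional K L]
    (hdeg : finrank K L = p) (pb : PowerBasis K L) {f : K}
    (hgen : pb.gen ^ p - pb.gen = algebraMap K L f) (b : ℕ → K) :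
    ∑ σ : L ≃ₐ[K] L, σ (∑ i ∈ Finset.range p, algebraMap K L (b i) * pb.gen ^ i) =
      -algebraMap K L (b (p - 1)) := by
  have hlast : ∑ σ : L ≃ₐ[K] L, σ pb.gen ^ (p - 1) = -1 := by
    rw [sum_algEquiv_apply_gen_eq_sum_zmod hdeg pb hgen (· ^ (p - 1)),
      ZMod.sum_add_castHom_pow_card_sub_one]
  conv_lhs => rw [← Nat.sub_add_cancel (Fact.out : p.Prime).one_le, Finset.sum_range_succ]
  simp only [map_add, Finset.sum_add_distrib, sum_algEquiv_sum_range_pred_eq_zero hdeg pb hgen,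
    _root_.map_mul, map_pow, AlgEquiv.commutes, ← Finset.mul_sum, hlast]
  ring

end ArtinSchreier

namespace CompleteDiscreteValuation

variable {F : Type*} [Field F] (w : CompleteDiscreteValuation F)

def toAddValuation : AddValuation F (WithTop ℤ) :=
  AddValuation.of w.v w.v_zero w.map_one w.min_le_add w.map_mul

@[simp]
theorem toAddValuation_apply (x : F) : w.toAddValuation x = w.v x := rfl

theorem exists_v_eq_coe {x : F} (hx : x ≠ 0) : ∃ m : ℤ, w.v x = m :=
  (WithTop.ne_top_iff_exists.1 ((w.eq_top_iff x).not.2 hx)).imp fun _ h ↦ h.symm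

end CompleteDiscreteValuation

theorem eq_of_natCast_mul_sub_mul_eq {p s i j : ℕ} (hcop : s.Coprime p) (hi : i < p) (hj : j < p)
    {m n : ℤ} (h : p * m - i * s = p * n - j * s) : i = j := by
  have hdvd : (p : ℤ) ∣ (i - j) * s := ⟨m - n, by linarith⟩
  have hdvd' : (p : ℤ) ∣ i - j :=
    (Nat.isCoprime_iff_coprime.2 hcop.symm).dvd_of_dvd_mul_right hdvd
  have := Int.eq_zero_of_abs_lt_dvd hdvd' (by rw [abs_lt]; omega)
  omega

section ArtinSchreierValuation

variable {p s : ℕ} {K L : Type*} [Field K] [Field L] [Algebra K L]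
  {wK : CompleteDiscreteValuation K} {wL : CompleteDiscreteValuation L}

theorem v_eq_of_pow_sub_self_eq_algebraMap
    (htot : ∀ x : K, wL.v (algebraMap K L x) = p • wK.v x) (hp : 1 < p) (hs : 0 < s)
    {x : L} {f : K} (hx : x ^ p - x = algebraMap K L f)
    (hf : wK.v f = ((-s : ℤ) : WithTop ℤ)) :
    wL.v x = ((-s : ℤ) : WithTop ℤ) :=
  wL.toAddValuation.map_eq_of_pow_sub_self_eq hp (by omega) (by
    rw [toAddValuation_apply, hx, htot, hf, ← WithTop.coe_nsmul, nsmul_eq_mul])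

theorem notMem_bot_of_v_eq_neg (htot : ∀ x : K, wL.v (algebraMap K L x) = p • wK.v x)
    (hp : p.Prime) (hcop : s.Coprime p) {x : L} (hx : wL.v x = ((-s : ℤ) : WithTop ℤ)) :
    x ∉ (⊥ : IntermediateField K L) := by
  intro hmem
  obtain ⟨a, rfl⟩ := IntermediateField.mem_bot.1 hmem
  have ha : a ≠ 0 := by
    rintro rfl
    rw [map_zero, wL.v_zero] at hx
    exact WithTop.top_ne_coe hx
  obtain ⟨m, hm⟩ := wK.exists_v_eq_coe ha
  rw [htot, hm, ← WithTop.coe_nsmul, nsmul_eq_mul, WithTop.coe_inj] at hx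
  have hdvd : p ∣ s := Int.natCast_dvd_natCast.1 ⟨-m, by linarith⟩
  exact hp.one_lt.ne' (Nat.Coprime.eq_one_of_dvd hcop.symm hdvd)

theorem v_algebraMap_mul_pow (htot : ∀ x : K, wL.v (algebraMap K L x) = p • wK.v x)
    {x : L} (hx : wL.v x = ((-s : ℤ) : WithTop ℤ)) {a : K} {m : ℤ}
    (ha : wK.v a = m) (i : ℕ) :
    wL.v (algebraMap K L a * x ^ i) = ((p * m - i * s : ℤ) : WithTop ℤ) := by
  rw [← toAddValuation_apply, AddValuation.map_mul, AddValuation.map_pow, toAddValuation_apply,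
    toAddValuation_apply, htot, ha, hx, ← WithTop.coe_nsmul, ← WithTop.coe_nsmul,
    ← WithTop.coe_add]
  congr 1
  simp only [nsmul_eq_mul]
  ring

theorem algebraMap_mul_pow_mem_integers_iff
    (htot : ∀ x : K, wL.v (algebraMap K L x) = p • wK.v x) (hp : 0 < p)
    {x : L} (hx : wL.v x = ((-s : ℤ) : WithTop ℤ)) (a : K) (i : ℕ) :
    algebraMap K L a * x ^ i ∈ wL.integers ↔
      ∀ m : ℤ, wK.v a = m → (i : ℚ) * s / p ≤ m := by
  rcases eq_or_ne a 0 with rfl | ha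
  · simp [wK.v_zero]
  obtain ⟨m, hm⟩ := wK.exists_v_eq_coe ha
  rw [mem_integers_iff, v_algebraMap_mul_pow htot hx hm, WithTop.coe_nonneg, hm]
  simp only [WithTop.coe_inj, forall_eq']
  rw [div_le_iff₀ (by exact_mod_cast hp), sub_nonneg, ← Int.cast_le (R := ℚ)]
  push_cast
  rw [mul_comm (m : ℚ)]

theorem injOn_v_algebraMap_mul_pow (htot : ∀ x : K, wL.v (algebraMap K L x) = p • wK.v x)
    (hcop : s.Coprime p) {x : L} (hx : wL.v x = ((-s : ℤ) : WithTop ℤ)) (b : ℕ → K) :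
    Set.InjOn (fun i ↦ wL.v (algebraMap K L (b i) * x ^ i))
      {i | i ∈ Finset.range p ∧ algebraMap K L (b i) * x ^ i ≠ 0} := by
  rintro i ⟨hi, hbi⟩ j ⟨hj, hbj⟩ heq
  obtain ⟨mi, hmi⟩ := wK.exists_v_eq_coe (x := b i) fun h ↦ hbi (by rw [h, map_zero, zero_mul])
  obtain ⟨mj, hmj⟩ := wK.exists_v_eq_coe (x := b j) fun h ↦ hbj (by rw [h, map_zero, zero_mul])
  dsimp only at heq
  rw [v_algebraMap_mul_pow htot hx hmi, v_algebraMap_mul_pow htot hx hmj, WithTop.coe_inj] at heq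
  exact eq_of_natCast_mul_sub_mul_eq hcop (Finset.mem_range.1 hi) (Finset.mem_range.1 hj) heq

end ArtinSchreierValuation

theorem trace_zero_integers_eq_artin_schreier_span_general
    (p : ℕ) (hp : p.Prime)
    {K L : Type*} [Field K] [Field L] [Algebra K L] [CharP K p]
    (wK : CompleteDiscreteValuation K) (wL : CompleteDiscreteValuation L)
    [IsGalois K L] [FiniteDimensional K L] (hdeg : Module.finrank K L = p)
    (htot : ∀ x : K, wL.v (algebraMap K L x) = p • wK.v x)
    (s : ℕ) (hcop : Nat.Coprime s p)
    (f : K) (hf : wK.v f = ((-(s : ℤ) : ℤ) : WithTop ℤ))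
    (lam : L) (hlam : lam ^ p - lam = algebraMap K L f) :
    ∀ x : L, (x ∈ wL.integers ∧ ∑ τ : L ≃ₐ[K] L, τ x = 0) ↔
      ∃ a : ℕ → K,
        x = ∑ i ∈ Finset.range (p - 1), algebraMap K L (a i) * lam ^ i ∧
        ∀ i < p - 1, ∀ m : ℤ, wK.v (a i) = (m : WithTop ℤ) →
          (i : ℚ) * (s : ℚ) / (p : ℚ) ≤ (m : ℚ) := by
  have : Fact p.Prime := ⟨hp⟩
  have : CharP L p := charP_of_injective_algebraMap (algebraMap K L).injective p
  have hs : 0 < s := Nat.pos_of_ne_zero fun h ↦ hp.one_lt.ne' (by simpa [h] using hcop)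
  have hvlam := v_eq_of_pow_sub_self_eq_algebraMap htot hp.one_lt hs hlam hf
  obtain ⟨pb, rfl⟩ := exists_powerBasis_gen_eq_of_finrank_prime (by rwa [hdeg])
    (notMem_bot_of_v_eq_neg htot hp hcop hvlam)
  have hterm := algebraMap_mul_pow_mem_integers_iff htot hp.pos hvlam
  intro x
  constructor
  · rintro ⟨hx, htr⟩
    obtain ⟨b, rfl⟩ := pb.exists_eq_sum_range x
    rw [← pb.finrank, hdeg] at hx htr ⊢
    rw [sum_algEquiv_sum_range_eq_neg hdeg pb hlam, neg_eq_zero, map_eq_zero] at htr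
    refine ⟨b, ?_, fun i hi ↦ (hterm _ _).1 ?_⟩
    · conv_lhs => rw [← Nat.sub_add_cancel hp.one_le, Finset.sum_range_succ, htr, map_zero,
        zero_mul, add_zero]
    · exact (wL.toAddValuation.le_map_sum_iff_of_injOn
        (injOn_v_algebraMap_mul_pow htot hcop hvlam b)).1 hx i (Finset.mem_range.2 (by omega))
  · rintro ⟨a, rfl, ha⟩
    exact ⟨Subring.sum_mem _ fun i hi ↦ (hterm _ _).2 (ha i (Finset.mem_range.1 hi)),
      sum_algEquiv_sum_range_pred_eq_zero hdeg pb hlam a⟩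

/-- Let `L/K` be a totally ramified Galois extension of degree `p` of
complete discrete valued fields of characteristic `p` with ramification break `s`, and
let `λ ∈ L` be a root of `X^p - X - f` where `v_K(f) = -s` and `gcd(s, p) = 1`.  Then
the trace-zero elements of `O_L` are exactly
`{ Σ_{i ≤ p-2} aᵢ λ^i : aᵢ ∈ K, v_K(aᵢ) ≥ i s / p }`. -/
theorem trace_zero_integers_eq_artin_schreier_span
    (p : ℕ) (hp : p.Prime)
    {K L : Type*} [Field K] [Field L] [Algebra K L] [CharP K p]
    (wK : CompleteDiscreteValuation K) (wL : CompleteDiscreteValuation L)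
    [IsGalois K L] [FiniteDimensional K L] (hdeg : Module.finrank K L = p)
    (htot : ∀ x : K, wL.v (algebraMap K L x) = p • wK.v x)
    (s : ℕ) (hs : IsRamificationBreak K wL s) (hcop : Nat.Coprime s p)
    (f : K) (hf : wK.v f = ((-(s : ℤ) : ℤ) : WithTop ℤ))
    (lam : L) (hlam : lam ^ p - lam = algebraMap K L f) :
    ∀ x : L, (x ∈ wL.integers ∧ ∑ τ : L ≃ₐ[K] L, τ x = 0) ↔
      ∃ a : ℕ → K,
        x = ∑ i ∈ Finset.range (p - 1), algebraMap K L (a i) * lam ^ i ∧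
        ∀ i < p - 1, ∀ m : ℤ, wK.v (a i) = (m : WithTop ℤ) →
          (i : ℚ) * (s : ℚ) / (p : ℚ) ≤ (m : ℚ) :=
  trace_zero_integers_eq_artin_schreier_span_general p hp wK wL hdeg htot s hcop f hf lam hlam
end
end

section
/- Let L/K be a totally ramified Galois extension of degree p of complete discrete valued fields of characteristic p, with ramification break s, let λ ∈ L be a root of X^p − X − f where f ∈ K satisfies v_K(f) = −s with s coprime to p, and let σ be a generator of Gal(L/K). Then (σ−1)O_L = { σ(x) − x : x ∈ O_L } equals { Σ_{i=0}^{p−2} a_i λ^i : a_i ∈ K with v_K(a_i) ≥ (i+1)s/p for all i }. -/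
/-!
Common background: complete discretely valued fields, their valuation rings,
residue fields, Galois action on the valuation ring, truncated Witt vector
functoriality, and ramification breaks.
-/

noncomputable section

open scoped Classical

open CompleteDiscreteValuation

/-!
Since `v_L(λ) = -s` with `s` prime to `p`, the terms `b λ^i` (`b ∈ K`, `0 ≤ i < p`) have
valuations `p v_K(b) - i s` in pairwise distinct classes mod `p`, so the valuation of
`Σ bᵢ λ^i` is the minimum of the valuations of its terms. Hence `1, λ, …, λ^(p-1)` is a
`K`-basis of `L`, and `Σ bᵢ λ^i ∈ O_L` iff `i s ≤ p v_K(bᵢ)` for all `i`.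

A generator acts by `σ λ = λ + n` with `n ∈ 𝔽_p^×`, so
`(σ - 1)(b λ^i) = Σ_{j<i} (i choose j) n^(i-j) b λ^j` is triangular, with unit entries `i n`
just below the diagonal. Both sides of the theorem are additive groups. The image of each integral
term `bᵢ λ^i` lies in the right-hand side; conversely an admissible `a λ^j` equals
`(σ - 1)(a / ((j+1) n) · λ^(j+1))` up to admissible terms of lower degree, which gives the
reverse inclusion by induction on `j`.
-/

open Finset

theorem nsmul_top {α : Type*} [LinearOrderedAddCommMonoidWithTop α] {n : ℕ} (hn : n ≠ 0) :
    n • (⊤ : α) = ⊤ := by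
  obtain ⟨q, rfl⟩ := Nat.exists_eq_succ_of_ne_zero hn
  rw [succ_nsmul, add_top]

theorem nonneg_add_coe_neg_iff {y : WithTop ℤ} {t : ℤ} :
    0 ≤ y + ((-t : ℤ) : WithTop ℤ) ↔ (t : WithTop ℤ) ≤ y := by
  induction y using WithTop.recTopCoe with
  | top => simp
  | coe k => norm_cast; omega

theorem natCast_le_nsmul_iff_div_le {x : WithTop ℤ} {n p : ℕ} (hp : 0 < p) :
    (n : WithTop ℤ) ≤ p • x ↔ ∀ m : ℤ, x = m → (n : ℚ) / p ≤ m := by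
  induction x using WithTop.recTopCoe with
  | top => simp [nsmul_top hp.ne']
  | coe k =>
    rw [← WithTop.coe_nsmul, nsmul_eq_mul, ← WithTop.coe_natCast, WithTop.coe_le_coe]
    simp only [WithTop.coe_inj, forall_eq', div_le_iff₀ (Nat.cast_pos.2 hp : (0 : ℚ) < p)]
    rw [← Int.cast_le (R := ℚ), mul_comm]
    push_cast
    rfl

theorem eq_of_dvd_sub_mul_of_coprime {p s i j : ℕ} (hcop : s.Coprime p) (hi : i < p) (hj : j < p)
    (h : (p : ℤ) ∣ ((i : ℤ) - j) * s) : i = j := by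
  have hdvd := (Nat.isCoprime_iff_coprime.2 hcop.symm).dvd_of_dvd_mul_right h
  have := Int.eq_zero_of_abs_lt_dvd hdvd (by rw [abs_lt]; omega)
  omega

namespace AddValuation

section Ring

variable {R Γ₀ : Type*} [Ring R] [LinearOrderedAddCommMonoidWithTop Γ₀]
  (v : AddValuation R Γ₀)

theorem map_sum_eq_inf_of_ne {ι : Type*} [DecidableEq ι] (s : Finset ι) (f : ι → R)
    (hf : ∀ i ∈ s, ∀ j ∈ s, i ≠ j → v (f i) = v (f j) → v (f i) = ⊤) :
    v (∑ i ∈ s, f i) = s.inf fun i => v (f i) := by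
  induction s using Finset.induction_on with
  | empty => simp
  | insert a s ha ih =>
    have hs : v (∑ i ∈ s, f i) = s.inf fun i => v (f i) :=
      ih fun i hi j hj => hf i (mem_insert_of_mem hi) j (mem_insert_of_mem hj)
    rw [sum_insert ha, inf_insert]
    by_cases hne : v (f a) = v (∑ i ∈ s, f i)
    · have htop : v (f a) = ⊤ := by
        rcases s.eq_empty_or_nonempty with rfl | hne'
        · simpa using hne
        obtain ⟨i, hi, hinf⟩ := s.exists_mem_eq_inf hne' fun i => v (f i)
        exact hf a (mem_insert_self a s) i (mem_insert_of_mem hi) (by rintro rfl; exact ha hi)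
          (hne.trans (hs.trans hinf))
      have hsum : v (∑ i ∈ s, f i) = ⊤ := hne ▸ htop
      rw [← hs, hsum, htop, top_inf_eq, _root_.eq_top_iff]
      exact (le_min htop.ge hsum.ge).trans (v.map_add _ _)
    · rw [v.map_add_of_distinct_val hne, hs]

theorem map_natCast_nonneg (n : ℕ) : 0 ≤ v (n : R) := by
  induction n with
  | zero => simp
  | succ n ih => rw [Nat.cast_succ]; exact v.map_le_add ih (by simp)

theorem map_intCast_nonneg (n : ℤ) : 0 ≤ v (n : R) := by
  cases n with
  | ofNat n => simpa using v.map_natCast_nonneg n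
  | negSucc n => rw [Int.cast_negSucc, v.map_neg]; exact v.map_natCast_nonneg (n + 1)

theorem le_nsmul_map_intCast_mul {t : Γ₀} {p : ℕ} {b : R} (h : t ≤ p • v b) (m : ℤ) :
    t ≤ p • v ((m : R) * b) := by
  refine h.trans (nsmul_le_nsmul_right ?_ p)
  rw [v.map_mul]
  exact le_add_of_nonneg_left (v.map_intCast_nonneg m)

end Ring

section Field

variable {K : Type*} [Field K] (v : AddValuation K (WithTop ℤ))

theorem map_eq_zero_of_pow_eq_self {x : K} (hx : x ≠ 0) {n : ℕ} (hn : 2 ≤ n)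
    (h : x ^ n = x) : v x = 0 := by
  obtain ⟨m, hm⟩ := WithTop.ne_top_iff_exists.1 ((v.ne_top_iff).2 hx)
  have hpow := v.map_pow x n
  rw [h, ← hm, ← WithTop.coe_nsmul, WithTop.coe_eq_coe, nsmul_eq_mul] at hpow
  rw [← hm, WithTop.coe_eq_zero]
  nlinarith

theorem map_intCast_eq_zero (p : ℕ) [Fact p.Prime] [CharP K p] {n : ℤ} (hn : (n : K) ≠ 0) :
    v (n : K) = 0 :=
  v.map_eq_zero_of_pow_eq_self hn (Fact.out : p.Prime).two_le
    ((frobenius_def p _).symm.trans (map_intCast _ n))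

theorem map_eq_neg_of_map_pow_sub_self {x : K} {n : ℕ} (hn : 2 ≤ n) {m : ℤ} (hm : 0 < m)
    (h : v (x ^ n - x) = n • ((-m : ℤ) : WithTop ℤ)) : v x = ((-m : ℤ) : WithTop ℤ) := by
  have hx : x ≠ 0 := by
    rintro rfl
    rw [zero_pow (by omega), sub_zero, v.map_zero, ← WithTop.coe_nsmul] at h
    exact WithTop.top_ne_coe h
  obtain ⟨k, hk⟩ := WithTop.ne_top_iff_exists.1 (v.ne_top_iff.2 hx)
  have hpow : v (x ^ n) = ((n * k : ℤ) : WithTop ℤ) := by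
    rw [v.map_pow, ← hk, ← WithTop.coe_nsmul, nsmul_eq_mul]
  rw [← WithTop.coe_nsmul, nsmul_eq_mul] at h
  have hk_neg : k < 0 := by
    by_contra! hk0
    have hmin := v.map_sub (x ^ n) x
    rw [h, hpow, ← hk, ← WithTop.coe_min, WithTop.coe_le_coe, min_le_iff] at hmin
    rcases hmin with hmin | hmin <;> nlinarith
  have hlt : v (x ^ n) < v x := by
    rw [hpow, ← hk, WithTop.coe_lt_coe]
    nlinarith
  have heq := v.map_sub_eq_of_lt_left hlt
  rw [h, hpow, WithTop.coe_inj] at heq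
  rw [← hk, WithTop.coe_inj]
  have : (n : ℤ) ≠ 0 := by omega
  exact (mul_left_cancel₀ this heq).symm

end Field

end AddValuation

def CompleteDiscreteValuation.toAddValuation_s7 {K : Type*} [Field K]
    (w : CompleteDiscreteValuation K) : AddValuation K (WithTop ℤ) :=
  AddValuation.of w.v w.v_zero w.map_one w.min_le_add w.map_mul

theorem exists_intCast_eq_sub {p : ℕ} [Fact p.Prime] {K L : Type*} [Field K] [Field L]
    [Algebra K L] [CharP L p] {f : K} {lam : L} (hlam : lam ^ p - lam = algebraMap K L f)
    (σ : L ≃ₐ[K] L) : ∃ n : ℤ, σ lam = lam + n := by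
  have hσlam : σ lam ^ p - σ lam = algebraMap K L f := by
    rw [← map_pow, ← map_sub, hlam, AlgEquiv.commutes]
  have hc : (σ lam - lam) ^ p = σ lam - lam := by
    rw [sub_pow_char]
    linear_combination hσlam - hlam
  obtain ⟨n, hn⟩ := (mem_bot_iff_intCast p L).1 ((Subfield.mem_bot_iff_pow_eq_self L p).2 hc)
  exact ⟨n, by rw [hn]; ring⟩

theorem AlgHom.map_algebraMap_mul_pow_sub {K L : Type*} [CommRing K] [CommRing L] [Algebra K L]
    (σ : L →ₐ[K] L) {lam : L} {n : ℤ} (hσ : σ lam = lam + n) (b : K) (i : ℕ) :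
    σ (algebraMap K L b * lam ^ i) - algebraMap K L b * lam ^ i =
      ∑ j ∈ range i, algebraMap K L (((i.choose j * n ^ (i - j) : ℤ) : K) * b) * lam ^ j := by
  rw [_root_.map_mul, AlgHom.commutes, map_pow, hσ, add_pow, sum_range_succ, Nat.sub_self,
    pow_zero, Nat.choose_self, mul_add, mul_sum]
  push_cast
  simp only [map_intCast]
  ring_nf

/-- `(σ - 1) O_L`. -/
def subOneImage {K L : Type*} [CommRing K] [Ring L] [Algebra K L]
    (vL : AddValuation L (WithTop ℤ)) (σ : L ≃ₐ[K] L) : AddSubgroup L where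
  carrier := {x | ∃ y, 0 ≤ vL y ∧ x = σ y - y}
  add_mem' := by
    rintro _ _ ⟨y, hy, rfl⟩ ⟨y', hy', rfl⟩
    exact ⟨y + y', vL.map_le_add hy hy', by rw [map_add]; abel⟩
  zero_mem' := ⟨0, by simp, by simp⟩
  neg_mem' := by
    rintro _ ⟨y, hy, rfl⟩
    exact ⟨-y, by rwa [vL.map_neg], by rw [map_neg]; abel⟩

/-- `{Σ_{i ≤ p-2} aᵢ λ^i : v_K(aᵢ) ≥ (i+1) s / p}`, the bound being scaled by `p` so that it
needs no rational numbers and holds for `aᵢ = 0`. -/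
def artinSchreierSpan {K L : Type*} [CommRing K] [Ring L] [Algebra K L]
    (vK : AddValuation K (WithTop ℤ)) (lam : L) (p s : ℕ) : AddSubgroup L where
  carrier := {x | ∃ a : ℕ → K, x = ∑ i ∈ range (p - 1), algebraMap K L (a i) * lam ^ i ∧
    ∀ i < p - 1, (((i + 1) * s : ℕ) : WithTop ℤ) ≤ p • vK (a i)}
  add_mem' := by
    rintro _ _ ⟨a, rfl, ha⟩ ⟨a', rfl, ha'⟩
    refine ⟨a + a', by simp only [Pi.add_apply, map_add, add_mul, sum_add_distrib],
      fun i hi => ?_⟩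
    rcases min_le_iff.1 (vK.map_add (a i) (a' i)) with h | h
    · exact (ha i hi).trans (nsmul_le_nsmul_right h p)
    · exact (ha' i hi).trans (nsmul_le_nsmul_right h p)
  zero_mem' := ⟨0, by simp, fun i hi => by
    rw [Pi.zero_apply, vK.map_zero, nsmul_top (by omega)]
    exact le_top⟩
  neg_mem' := by
    rintro _ ⟨a, rfl, ha⟩
    exact ⟨-a, by simp [sum_neg_distrib], fun i hi => by simpa using ha i hi⟩

section ArtinSchreier

variable {p : ℕ} {K L : Type*} [Field K] [Field L] [Algebra K L]
  {vK : AddValuation K (WithTop ℤ)} {vL : AddValuation L (WithTop ℤ)} {s : ℕ} {lam : L}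

theorem map_algebraMap_mul_pow (htot : ∀ x : K, vL (algebraMap K L x) = p • vK x)
    (hvlam : vL lam = ((-s : ℤ) : WithTop ℤ)) (b : K) (i : ℕ) :
    vL (algebraMap K L b * lam ^ i) = p • vK b + ((-(i * s : ℕ) : ℤ) : WithTop ℤ) := by
  rw [vL.map_mul, htot, vL.map_pow, hvlam, ← WithTop.coe_nsmul, nsmul_eq_mul]
  congr 2
  push_cast
  ring

theorem nonneg_map_algebraMap_mul_pow_iff (htot : ∀ x : K, vL (algebraMap K L x) = p • vK x)
    (hvlam : vL lam = ((-s : ℤ) : WithTop ℤ)) (b : K) (i : ℕ) :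
    0 ≤ vL (algebraMap K L b * lam ^ i) ↔ ((i * s : ℕ) : WithTop ℤ) ≤ p • vK b := by
  rw [map_algebraMap_mul_pow htot hvlam, nonneg_add_coe_neg_iff, WithTop.coe_natCast]

theorem map_algebraMap_mul_pow_eq_top_of_eq (htot : ∀ x : K, vL (algebraMap K L x) = p • vK x)
    (hvlam : vL lam = ((-s : ℤ) : WithTop ℤ)) (hcop : s.Coprime p) {i j : ℕ} (hi : i < p)
    (hj : j < p) (hij : i ≠ j) (b b' : K)
    (h : vL (algebraMap K L b * lam ^ i) = vL (algebraMap K L b' * lam ^ j)) :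
    vL (algebraMap K L b * lam ^ i) = ⊤ := by
  have hp : p ≠ 0 := by omega
  simp only [map_algebraMap_mul_pow htot hvlam] at h ⊢
  generalize vK b = x at h ⊢
  generalize vK b' = x' at h
  induction x using WithTop.recTopCoe with
  | top => simp [nsmul_top hp]
  | coe k =>
    exfalso
    induction x' using WithTop.recTopCoe with
    | top =>
      rw [nsmul_top hp, top_add, ← WithTop.coe_nsmul, ← WithTop.coe_add] at h
      exact WithTop.coe_ne_top h
    | coe k' =>
      rw [← WithTop.coe_nsmul, ← WithTop.coe_nsmul, ← WithTop.coe_add, ← WithTop.coe_add,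
        WithTop.coe_inj, nsmul_eq_mul, nsmul_eq_mul] at h
      exact hij (eq_of_dvd_sub_mul_of_coprime hcop hi hj ⟨k - k', by push_cast at h; linarith⟩)

theorem map_sum_le_map_algebraMap_mul_pow (htot : ∀ x : K, vL (algebraMap K L x) = p • vK x)
    (hvlam : vL lam = ((-s : ℤ) : WithTop ℤ)) (hcop : s.Coprime p) (b : Fin p → K)
    (i : Fin p) :
    vL (∑ j, algebraMap K L (b j) * lam ^ (j : ℕ)) ≤
      vL (algebraMap K L (b i) * lam ^ (i : ℕ)) := by
  rw [vL.map_sum_eq_inf_of_ne]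
  · exact inf_le (mem_univ i)
  · intro i _ j _ hij
    exact map_algebraMap_mul_pow_eq_top_of_eq htot hvlam hcop i.2 j.2 (Fin.val_ne_of_ne hij) _ _

theorem exists_sum_algebraMap_mul_pow_eq [FiniteDimensional K L]
    (htot : ∀ x : K, vL (algebraMap K L x) = p • vK x)
    (hvlam : vL lam = ((-s : ℤ) : WithTop ℤ))
    (hcop : s.Coprime p) (hdeg : Module.finrank K L = p) (y : L) :
    ∃ b : Fin p → K, ∑ i, algebraMap K L (b i) * lam ^ (i : ℕ) = y := by
  have hlam0 : lam ≠ 0 := by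
    rintro rfl
    exact WithTop.top_ne_coe (vL.map_zero ▸ hvlam)
  have hind : LinearIndependent K fun i : Fin p => lam ^ (i : ℕ) := by
    rw [Fintype.linearIndependent_iff]
    intro g hg i
    simp only [Algebra.smul_def] at hg
    have hle := map_sum_le_map_algebraMap_mul_pow htot hvlam hcop g i
    rw [hg, vL.map_zero, top_le_iff, vL.top_iff] at hle
    simpa [hlam0] using hle
  have hspan := hind.span_eq_top_of_card_eq_finrank' (by simp [hdeg])
  obtain ⟨b, hb⟩ := (Submodule.mem_span_range_iff_exists_fun K).1 (hspan ▸ Submodule.mem_top)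
  exact ⟨b, by simpa [Algebra.smul_def] using hb⟩

theorem apply_ne_self_of_forall_mem_zpowers [FiniteDimensional K L] [IsGalois K L]
    (htot : ∀ x : K, vL (algebraMap K L x) = p • vK x)
    (hvlam : vL lam = ((-s : ℤ) : WithTop ℤ))
    (hcop : s.Coprime p) (hdeg : Module.finrank K L = p) (hp : 1 < p) {σ : L ≃ₐ[K] L}
    (hσ : ∀ τ : L ≃ₐ[K] L, τ ∈ Subgroup.zpowers σ) : σ lam ≠ lam := by
  intro hfix
  have hσ1 : σ = 1 := AlgEquiv.ext fun y => by
    obtain ⟨b, rfl⟩ := exists_sum_algebraMap_mul_pow_eq htot hvlam hcop hdeg y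
    simp [hfix]
  have : Subsingleton (L ≃ₐ[K] L) := ⟨fun τ τ' => by
    have hτ := hσ τ
    have hτ' := hσ τ'
    rw [hσ1, Subgroup.zpowers_one_eq_bot, Subgroup.mem_bot] at hτ hτ'
    rw [hτ, hτ']⟩
  have hcard := IsGalois.card_aut_eq_finrank K L
  rw [Nat.card_of_subsingleton (1 : L ≃ₐ[K] L), hdeg] at hcard
  omega

theorem algebraMap_mul_pow_mem_artinSchreierSpan {a : K} {j : ℕ} (hj : j < p - 1)
    (ha : (((j + 1) * s : ℕ) : WithTop ℤ) ≤ p • vK a) :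
    algebraMap K L a * lam ^ j ∈ artinSchreierSpan vK lam p s := by
  refine ⟨Pi.single j a, ?_, fun i hi => ?_⟩
  · rw [sum_eq_single_of_mem j (mem_range.2 hj) fun i _ hij => by simp [hij]]
    simp
  · by_cases hij : i = j
    · subst hij
      simpa using ha
    · rw [Pi.single_eq_of_ne hij, vK.map_zero, nsmul_top (by omega)]
      exact le_top

theorem subOneImage_le_artinSchreierSpan [FiniteDimensional K L]
    (htot : ∀ x : K, vL (algebraMap K L x) = p • vK x)
    (hvlam : vL lam = ((-s : ℤ) : WithTop ℤ))
    (hcop : s.Coprime p) (hdeg : Module.finrank K L = p) {σ : L ≃ₐ[K] L} {n : ℤ}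
    (hσ : σ lam = lam + n) : subOneImage vL σ ≤ artinSchreierSpan vK lam p s := by
  rintro _ ⟨y, hy, rfl⟩
  obtain ⟨b, rfl⟩ := exists_sum_algebraMap_mul_pow_eq htot hvlam hcop hdeg y
  rw [map_sum, ← sum_sub_distrib]
  refine AddSubgroup.sum_mem _ fun i _ => ?_
  have hb := (nonneg_map_algebraMap_mul_pow_iff htot hvlam (b i) i).1
    (hy.trans (map_sum_le_map_algebraMap_mul_pow htot hvlam hcop b i))
  rw [show σ _ - _ = _ from σ.toAlgHom.map_algebraMap_mul_pow_sub hσ (b i) i]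
  refine AddSubgroup.sum_mem _ fun j hj => algebraMap_mul_pow_mem_artinSchreierSpan
    (by have := mem_range.1 hj; omega) (vK.le_nsmul_map_intCast_mul (le_trans ?_ hb) _)
  exact_mod_cast Nat.mul_le_mul_right s (mem_range.1 hj)

theorem algebraMap_mul_pow_mem_subOneImage [Fact p.Prime] [CharP K p]
    (htot : ∀ x : K, vL (algebraMap K L x) = p • vK x)
    (hvlam : vL lam = ((-s : ℤ) : WithTop ℤ))
    {σ : L ≃ₐ[K] L} {n : ℤ} (hn : (n : K) ≠ 0) (hσ : σ lam = lam + n) {j : ℕ} (hj : j < p - 1)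
    {a : K} (ha : (((j + 1) * s : ℕ) : WithTop ℤ) ≤ p • vK a) :
    algebraMap K L a * lam ^ j ∈ subOneImage vL σ := by
  induction j using Nat.strong_induction_on generalizing a with
  | _ j ih =>
  have hu : (((j + 1) * n : ℤ) : K) ≠ 0 := by
    push_cast
    refine mul_ne_zero ?_ hn
    exact_mod_cast (CharP.cast_eq_zero_iff K p (j + 1)).not.2
      (Nat.not_dvd_of_pos_of_lt (by omega) (by omega))
  set b := a / (((j + 1) * n : ℤ) : K)
  have hb : vK b = vK a := by rw [vK.map_div, vK.map_intCast_eq_zero p hu, sub_zero]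
  have hy : σ (algebraMap K L b * lam ^ (j + 1)) - algebraMap K L b * lam ^ (j + 1) ∈
      subOneImage vL σ :=
    ⟨_, (nonneg_map_algebraMap_mul_pow_iff htot hvlam b (j + 1)).2 (hb ▸ ha), rfl⟩
  rw [show σ _ - _ = _ from σ.toAlgHom.map_algebraMap_mul_pow_sub hσ b (j + 1),
    sum_range_succ] at hy
  have hlast : (((j + 1).choose j * n ^ (j + 1 - j) : ℤ) : K) * b = a := by
    rw [Nat.choose_succ_self_right, Nat.add_sub_cancel_left, pow_one]
    exact mul_div_cancel₀ a hu
  rw [hlast] at hy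
  have hbound : ∀ i ∈ range j, (((i + 1) * s : ℕ) : WithTop ℤ) ≤ p • vK b := fun i hi => by
    refine le_trans ?_ (hb ▸ ha)
    exact_mod_cast Nat.mul_le_mul_right s (Nat.succ_le_succ (mem_range.1 hi).le)
  have hrest := AddSubgroup.sum_mem (subOneImage vL σ) fun i hi =>
    ih i (mem_range.1 hi) (by have := mem_range.1 hi; omega)
      (vK.le_nsmul_map_intCast_mul (hbound i hi) ((j + 1).choose i * n ^ (j + 1 - i)))
  simpa using sub_mem hy hrest

theorem artinSchreierSpan_le_subOneImage [Fact p.Prime] [CharP K p]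
    (htot : ∀ x : K, vL (algebraMap K L x) = p • vK x)
    (hvlam : vL lam = ((-s : ℤ) : WithTop ℤ))
    {σ : L ≃ₐ[K] L} {n : ℤ} (hn : (n : K) ≠ 0) (hσ : σ lam = lam + n) :
    artinSchreierSpan vK lam p s ≤ subOneImage vL σ := by
  rintro _ ⟨a, rfl, ha⟩
  exact AddSubgroup.sum_mem _ fun j hj =>
    algebraMap_mul_pow_mem_subOneImage htot hvlam hn hσ (mem_range.1 hj) (ha j (mem_range.1 hj))

end ArtinSchreier

theorem sigma_sub_one_integers_eq_artin_schreier_span_general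
    (p : ℕ) (hp : p.Prime)
    {K L : Type*} [Field K] [Field L] [Algebra K L] [CharP K p]
    (wK : CompleteDiscreteValuation K) (wL : CompleteDiscreteValuation L)
    [IsGalois K L] [FiniteDimensional K L] (hdeg : Module.finrank K L = p)
    (htot : ∀ x : K, wL.v (algebraMap K L x) = p • wK.v x)
    (s : ℕ) (hcop : Nat.Coprime s p)
    (f : K) (hf : wK.v f = ((-(s : ℤ) : ℤ) : WithTop ℤ))
    (lam : L) (hlam : lam ^ p - lam = algebraMap K L f)
    (σ : L ≃ₐ[K] L) (hσ : ∀ τ : L ≃ₐ[K] L, τ ∈ Subgroup.zpowers σ) :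
    ∀ x : L, (∃ y : L, y ∈ wL.integers ∧ x = σ y - y) ↔
      ∃ a : ℕ → K,
        x = ∑ i ∈ Finset.range (p - 1), algebraMap K L (a i) * lam ^ i ∧
        ∀ i < p - 1, ∀ m : ℤ, wK.v (a i) = (m : WithTop ℤ) →
          ((i : ℚ) + 1) * (s : ℚ) / (p : ℚ) ≤ (m : ℚ) := by
  have : Fact p.Prime := ⟨hp⟩
  have : CharP L p := charP_of_injective_algebraMap (algebraMap K L).injective p
  have htot' : ∀ x : K, wL.toAddValuation_s7 (algebraMap K L x) = p • wK.toAddValuation_s7 x := htot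
  have hs : 0 < s := Nat.pos_of_ne_zero fun h => hp.one_lt.ne' (by simpa [h] using hcop)
  have hvlam : wL.toAddValuation_s7 lam = ((-s : ℤ) : WithTop ℤ) :=
    wL.toAddValuation_s7.map_eq_neg_of_map_pow_sub_self hp.two_le (by omega)
      (by rw [hlam]; exact (htot f).trans (congrArg _ hf))
  obtain ⟨n, hn⟩ := exists_intCast_eq_sub hlam σ
  have hn0 : (n : K) ≠ 0 := fun h0 =>
    apply_ne_self_of_forall_mem_zpowers htot' hvlam hcop hdeg hp.one_lt hσ
      (by rw [hn, ← map_intCast (algebraMap K L), h0, map_zero, add_zero])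
  have heq : subOneImage wL.toAddValuation_s7 σ = artinSchreierSpan wK.toAddValuation_s7 lam p s :=
    le_antisymm (subOneImage_le_artinSchreierSpan htot' hvlam hcop hdeg hn)
      (artinSchreierSpan_le_subOneImage htot' hvlam hn0 hn)
  intro x
  refine (SetLike.ext_iff.1 heq x).trans
    (exists_congr fun a => and_congr_right fun _ => forall₂_congr fun i _ => ?_)
  rw [natCast_le_nsmul_iff_div_le hp.pos]
  push_cast
  rfl

/-- Let `L/K` be a totally ramified Galois extension of degree `p` of
complete discrete valued fields of characteristic `p` with ramification break `s`, let
`λ ∈ L` be a root of `X^p - X - f` where `v_K(f) = -s` and `gcd(s, p) = 1`, and let `σ`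
be a generator of `Gal(L/K)`.  Then
`(σ - 1) O_L = { Σ_{i ≤ p-2} aᵢ λ^i : aᵢ ∈ K, v_K(aᵢ) ≥ (i+1) s / p }`. -/
theorem sigma_sub_one_integers_eq_artin_schreier_span
    (p : ℕ) (hp : p.Prime)
    {K L : Type*} [Field K] [Field L] [Algebra K L] [CharP K p]
    (wK : CompleteDiscreteValuation K) (wL : CompleteDiscreteValuation L)
    [IsGalois K L] [FiniteDimensional K L] (hdeg : Module.finrank K L = p)
    (htot : ∀ x : K, wL.v (algebraMap K L x) = p • wK.v x)
    (s : ℕ) (hs : IsRamificationBreak K wL s) (hcop : Nat.Coprime s p)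
    (f : K) (hf : wK.v f = ((-(s : ℤ) : ℤ) : WithTop ℤ))
    (lam : L) (hlam : lam ^ p - lam = algebraMap K L f)
    (σ : L ≃ₐ[K] L) (hσ : ∀ τ : L ≃ₐ[K] L, τ ∈ Subgroup.zpowers σ) :
    ∀ x : L, (∃ y : L, y ∈ wL.integers ∧ x = σ y - y) ↔
      ∃ a : ℕ → K,
        x = ∑ i ∈ Finset.range (p - 1), algebraMap K L (a i) * lam ^ i ∧
        ∀ i < p - 1, ∀ m : ℤ, wK.v (a i) = (m : WithTop ℤ) →
          ((i : ℚ) + 1) * (s : ℚ) / (p : ℚ) ≤ (m : ℚ) :=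
  sigma_sub_one_integers_eq_artin_schreier_span_general p hp wK wL hdeg htot s hcop f hf lam hlam σ
    hσ
end
end
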